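/- arXiv:2605.31558 — 6 statements merged into one kernel-verified Lean document; each statement's English description precedes it below -/
import Mathlib

section
/- For any real angle θ and any integer n > 1, there exists an integer t with 1 ≤ t ≤ n such that 1 - cos(t·θ) ≤ 2π²/n². -/
open Real

theorem exists_small_one_sub_cos (θ : ℝ) (n : ℤ) (hn : 1 < n) :
    ∃ t : ℤ, 1 ≤ t ∧ t ≤ n ∧ 1 - Real.cos ((t : ℝ) * θ) ≤ 2 * π ^ 2 / (n : ℝ) ^ 2 := by
  have hm : 0 < (n - 1).toNat := by omega
  obtain ⟨j, k, hk0, hk1, h⟩ := Real.exists_int_int_abs_mul_sub_le (θ / (2 * π)) hm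
  have hcast : ((n - 1).toNat : ℝ) + 1 = (n : ℝ) := by
    have : ((n - 1).toNat : ℤ) = n - 1 := by omega
    rw [show ((n - 1).toNat : ℝ) = ((((n-1).toNat : ℤ)) : ℝ) from rfl, this]; push_cast; ring
  rw [hcast] at h
  have hπ : (0 : ℝ) < π := Real.pi_pos
  have hn0 : (0 : ℝ) < n := by exact_mod_cast (by omega : (0:ℤ) < n)
  refine ⟨k, hk0, by exact_mod_cast hk1.trans (by omega : ((n-1).toNat : ℤ) ≤ n), ?_⟩
  set x : ℝ := (k : ℝ) * θ - j * (2 * π) with hx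
  have hcos : Real.cos ((k : ℝ) * θ) = Real.cos x := by
    rw [hx]; rw [Real.cos_sub_int_mul_two_pi]
  have hxb : |x| ≤ 2 * π / n := by
    have : x = ((k : ℝ) * (θ / (2 * π)) - j) * (2 * π) := by
      field_simp [hx]; ring
    rw [this, abs_mul, abs_of_pos (by positivity : (0:ℝ) < 2 * π)]
    calc |(k : ℝ) * (θ / (2 * π)) - j| * (2 * π) ≤ (1 / n) * (2 * π) := by
          apply mul_le_mul_of_nonneg_right h (by positivity)
      _ = 2 * π / n := by ring
  have h1 : 1 - x ^ 2 / 2 ≤ Real.cos x := Real.one_sub_sq_div_two_le_cos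
  have h2 : x ^ 2 ≤ (2 * π / n) ^ 2 := by
    rw [← sq_abs]
    exact pow_le_pow_left₀ (abs_nonneg x) hxb 2
  rw [hcos]
  have : (2 * π / n) ^ 2 / 2 = 2 * π ^ 2 / (n : ℝ) ^ 2 := by field_simp
  nlinarith [h1, h2]
end

section
/- Fix a real angle θ > 0 and an integer n > 1. Define the Index discrepancy at length n as Δ(n) = 1 - max{cos(t·θ) : t ∈ ℤ, 1 ≤ |t| ≤ n}. Then Δ(n) ≤ min{1 - cos(θ), 2π²/n²}. -/
open Real

theorem index_discrepancy_bound (θ : ℝ) (hθ : 0 < θ) (n : ℤ) (hn : 1 < n) :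
    1 - sSup {c : ℝ | ∃ t : ℤ, 1 ≤ |t| ∧ |t| ≤ n ∧ c = Real.cos ((t : ℝ) * θ)}
      ≤ min (1 - Real.cos θ) (2 * π ^ 2 / (n : ℝ) ^ 2) := by
  set S := {c : ℝ | ∃ t : ℤ, 1 ≤ |t| ∧ |t| ≤ n ∧ c = Real.cos ((t : ℝ) * θ)}
  have hbdd : BddAbove S := by
    refine ⟨1, fun c hc => ?_⟩
    obtain ⟨t, _, _, rfl⟩ := hc
    exact Real.cos_le_one _
  have hmem : ∀ c ∈ S, 1 - sSup S ≤ 1 - c := fun c hc => by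
    have := le_csSup hbdd hc; linarith
  -- first bound: t = 1
  have h1 : Real.cos θ ∈ S := ⟨1, by norm_num, by simp; omega, by norm_num⟩
  -- second bound via Dirichlet
  have hnnat : 0 < n.toNat := by omega
  obtain ⟨j, k, hk0, hkn, hjk⟩ :=
    Real.exists_int_int_abs_mul_sub_le (θ / (2 * π)) hnnat
  have hkn' : (k : ℝ) ≤ (n : ℝ) := by
    have : k ≤ n := by omega
    exact_mod_cast this
  have hnpos : (0 : ℝ) < (n : ℝ) := by exact_mod_cast (by omega : (0:ℤ) < n)
  have hπ : (0 : ℝ) < π := Real.pi_pos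
  have habs : |(k : ℝ) * θ - (j : ℝ) * (2 * π)| ≤ 2 * π / (n : ℝ) := by
    have h2π : (0 : ℝ) < 2 * π := by positivity
    have hrw : (k : ℝ) * θ - (j : ℝ) * (2 * π)
        = ((k : ℝ) * (θ / (2 * π)) - j) * (2 * π) := by field_simp
    rw [hrw, abs_mul, abs_of_pos h2π]
    have hle : (1 : ℝ) / ((n.toNat : ℝ) + 1) ≤ 1 / (n : ℝ) := by
      apply one_div_le_one_div_of_le hnpos
      have : ((n.toNat : ℤ) : ℝ) = (n.toNat : ℝ) := by push_cast; ring
      have hcast : (n : ℝ) ≤ (n.toNat : ℝ) := by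
        have : n ≤ (n.toNat : ℤ) := by omega
        exact_mod_cast this
      linarith
    calc |(k : ℝ) * (θ / (2 * π)) - j| * (2 * π)
        ≤ (1 / ((n.toNat : ℝ) + 1)) * (2 * π) := by
          apply mul_le_mul_of_nonneg_right hjk (le_of_lt h2π)
      _ ≤ (1 / (n : ℝ)) * (2 * π) := by
          apply mul_le_mul_of_nonneg_right hle (le_of_lt h2π)
      _ = 2 * π / (n : ℝ) := by ring
  have hcos : 1 - 2 * π ^ 2 / (n : ℝ) ^ 2 ≤ Real.cos ((k : ℝ) * θ) := by
    have := Real.one_sub_sq_div_two_le_cos (x := (k : ℝ) * θ - (j : ℝ) * (2 * π))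
    have heq : Real.cos ((k : ℝ) * θ - (j : ℝ) * (2 * π)) = Real.cos ((k : ℝ) * θ) :=
      Real.cos_sub_int_mul_two_pi _ j
    have hsq : ((k : ℝ) * θ - (j : ℝ) * (2 * π)) ^ 2 ≤ (2 * π / (n : ℝ)) ^ 2 := by
      have := sq_abs ((k : ℝ) * θ - (j : ℝ) * (2 * π))
      nlinarith [abs_nonneg ((k : ℝ) * θ - (j : ℝ) * (2 * π))]
    have : (2 * π / (n : ℝ)) ^ 2 / 2 = 2 * π ^ 2 / (n : ℝ) ^ 2 := by
      field_simp
    nlinarith [Real.one_sub_sq_div_two_le_cos (x := (k : ℝ) * θ - (j : ℝ) * (2 * π))]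
  have h2 : Real.cos ((k : ℝ) * θ) ∈ S := by
    have hka : |k| = k := abs_of_pos hk0
    refine ⟨k, ?_, ?_, rfl⟩
    · omega
    · omega
  refine le_min ?_ ?_
  · exact hmem _ h1
  · have := hmem _ h2; linarith
end

section
/- Let ω = 2π/m for an integer m ≥ 2. With θ = 0 (no positional rotation), the Retrieval discrepancy Δ(n) = 1 - max{cos(k·ω) : k ∈ ℤ, k not divisible by m} equals 1 - cos(ω) > 0 and is independent of the input length n. -/
/-!
`cos (k * (2π/m))` depends only on the residue `r = k % m`, and `k` is not a multiple of `m`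
exactly when `1 ≤ r ≤ m - 1`. Then `r * (2π/m)` lies in `[2π/m, 2π - 2π/m]`, on which cosine is
at most its value `cos (2π/m)` at the endpoints. That value is attained at `k = 1`, so it is the
maximum, and it is below `1` since `0 < 2π/m < 2π`.
-/

open Real

theorem Real.cos_le_cos_of_le_of_le_two_pi_sub {a x : ℝ} (ha : 0 ≤ a) (hax : a ≤ x)
    (hx : x ≤ 2 * π - a) : cos x ≤ cos a := by
  rcases le_or_gt x π with hxπ | hπx
  · exact cos_le_cos_of_nonneg_of_le_pi ha hxπ hax
  · rw [← cos_two_pi_sub x]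
    exact cos_le_cos_of_nonneg_of_le_pi ha (by linarith) (by linarith)

theorem Real.cos_int_mul_two_pi_div_emod (m : ℕ) (k : ℤ) :
    cos ((k % m : ℤ) * (2 * π / m)) = cos (k * (2 * π / m)) := by
  rcases Nat.eq_zero_or_pos m with rfl | hm
  · simp
  have hk : (k : ℝ) * (2 * π / m) = (k % m : ℤ) * (2 * π / m) + (k / m : ℤ) * (2 * π) := by
    have hdiv : (k : ℝ) = m * (k / m : ℤ) + (k % m : ℤ) := by
      exact_mod_cast (Int.mul_ediv_add_emod k m).symm
    rw [hdiv]
    field_simp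
    ring
  rw [hk, cos_add_int_mul_two_pi]

theorem Real.cos_int_mul_two_pi_div_le_of_not_dvd (m : ℕ) {k : ℤ} (hk : ¬ (m : ℤ) ∣ k) :
    cos (k * (2 * π / m)) ≤ cos (2 * π / m) := by
  rcases Nat.eq_zero_or_pos m with rfl | hm
  · simp
  set r := k % m
  have hr_pos : 1 ≤ r :=
    (Int.emod_nonneg k (by omega)).lt_of_ne (fun h => hk (Int.dvd_of_emod_eq_zero h.symm))
  have hr_lt : r ≤ m - 1 := by linarith [Int.emod_lt_of_pos k (by omega : (0 : ℤ) < m)]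
  have hr_pos' : (1 : ℝ) ≤ r := by exact_mod_cast hr_pos
  have hr_lt' : (r : ℝ) ≤ m - 1 := by exact_mod_cast hr_lt
  have hω : 0 ≤ 2 * π / m := by positivity
  have hmω : (m : ℝ) * (2 * π / m) = 2 * π := by field_simp
  rw [← cos_int_mul_two_pi_div_emod]
  refine cos_le_cos_of_le_of_le_two_pi_sub hω ?_ ?_ <;> nlinarith

theorem Real.isGreatest_cos_int_mul_two_pi_div_of_not_dvd {m : ℕ} (hm : m ≠ 1) :
    IsGreatest {c : ℝ | ∃ k : ℤ, ¬ (m : ℤ) ∣ k ∧ c = cos (k * (2 * π / m))} (cos (2 * π / m)) := by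
  refine ⟨⟨1, ?_, by simp⟩, ?_⟩
  · exact fun h => hm (by exact_mod_cast Int.eq_one_of_dvd_one (by positivity) h)
  · rintro c ⟨k, hk, rfl⟩
    exact cos_int_mul_two_pi_div_le_of_not_dvd m hk

theorem Real.cos_two_pi_div_lt_one {m : ℕ} (hm : 1 < m) : cos (2 * π / m) < 1 := by
  have hω_pos : 0 < 2 * π / m := by positivity
  have hω_lt : 2 * π / m < 2 * π := div_lt_self (by positivity) (by exact_mod_cast hm)
  refine (cos_le_one _).lt_of_ne fun h => hω_pos.ne' ?_
  exact (cos_eq_one_iff_of_lt_of_lt (by linarith) hω_lt).mp h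

theorem nope_retrieval_discrepancy (m : ℕ) (hm : 2 ≤ m) :
    1 - sSup {c : ℝ | ∃ k : ℤ, ¬ ((m : ℤ) ∣ k) ∧ c = Real.cos ((k : ℝ) * (2 * π / m))}
        = 1 - Real.cos (2 * π / m) ∧
    0 < 1 - Real.cos (2 * π / m) := by
  refine ⟨?_, sub_pos.mpr (cos_two_pi_div_lt_one hm)⟩
  rw [(isGreatest_cos_int_mul_two_pi_div_of_not_dvd (by omega)).csSup_eq]
end

section
/- Let l : Fin n → ℝ be a vector of logits, let μ = max_j l(j), let J = {j : l(j) = μ} with |J| = k, and suppose λ = μ - max{l(j) : j ∉ J} > 0 (assuming J ≠ Fin n). For β > 0 define the softmax weights w_j(β) = exp(β·l(j)) / Σ_i exp(β·l(i)). Then for every j ∈ J: 1/(k + (n - k)·exp(-β·λ)) ≤ w_j(β) ≤ 1/k. -/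
open Real Finset

theorem softmax_weight_bounds_max {n : ℕ}
    (l : Fin n → ℝ) (hne : (Finset.univ : Finset (Fin n)).Nonempty)
    (μ : ℝ) (hμ : μ = Finset.univ.sup' hne l)
    (J : Finset (Fin n)) (hJ : J = Finset.univ.filter (fun j => l j = μ))
    (k : ℕ) (hk : k = J.card)
    (hcne : Jᶜ.Nonempty)
    (lam : ℝ) (hlam : lam = μ - Jᶜ.sup' hcne l) (hlampos : 0 < lam)
    (β : ℝ) (hβ : 0 < β)
    (w : Fin n → ℝ)
    (hw : ∀ j, w j = Real.exp (β * l j) / ∑ i, Real.exp (β * l i)) :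
    ∀ j ∈ J,
      1 / ((k : ℝ) + ((n : ℝ) - (k : ℝ)) * Real.exp (-β * lam)) ≤ w j ∧
      w j ≤ 1 / (k : ℝ) := by
  intro j hj
  have hljμ : l j = μ := by
    rw [hJ] at hj; simpa using hj
  have hJsum : ∑ i ∈ J, Real.exp (β * l i) = (k : ℝ) * Real.exp (β * μ) := by
    have h : ∀ i ∈ J, Real.exp (β * l i) = Real.exp (β * μ) := by
      intro i hi; rw [hJ] at hi; simp only [Finset.mem_filter] at hi; rw [hi.2]
    rw [Finset.sum_congr rfl h, Finset.sum_const, nsmul_eq_mul, hk]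
  have hkpos : 0 < (k : ℝ) := by
    have : j ∈ J := hj
    have : 0 < J.card := Finset.card_pos.mpr ⟨j, hj⟩
    rw [hk]; exact_mod_cast this
  have hcard : (Jᶜ.card : ℝ) = (n : ℝ) - (k : ℝ) := by
    rw [Finset.card_compl, hk]
    have := Finset.card_le_univ J
    push_cast [Nat.cast_sub this]
    simp
  have hcompsum_le : ∑ i ∈ Jᶜ, Real.exp (β * l i)
      ≤ ((n : ℝ) - (k : ℝ)) * Real.exp (β * (μ - lam)) := by
    calc ∑ i ∈ Jᶜ, Real.exp (β * l i)
        ≤ ∑ i ∈ Jᶜ, Real.exp (β * (μ - lam)) := by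
          apply Finset.sum_le_sum
          intro i hi
          apply Real.exp_le_exp.mpr
          apply mul_le_mul_of_nonneg_left _ hβ.le
          have : l i ≤ Jᶜ.sup' hcne l := Finset.le_sup' l hi
          linarith [hlam]
      _ = ((n : ℝ) - (k : ℝ)) * Real.exp (β * (μ - lam)) := by
          rw [Finset.sum_const, nsmul_eq_mul, hcard]
  have hcompsum_nonneg : 0 ≤ ∑ i ∈ Jᶜ, Real.exp (β * l i) :=
    Finset.sum_nonneg fun i _ => (Real.exp_pos _).le
  have hS : ∑ i, Real.exp (β * l i)
      = ∑ i ∈ J, Real.exp (β * l i) + ∑ i ∈ Jᶜ, Real.exp (β * l i) :=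
    (Finset.sum_add_sum_compl J _).symm
  have hSpos : 0 < ∑ i, Real.exp (β * l i) :=
    Finset.sum_pos (fun i _ => Real.exp_pos _) hne
  have hexpμ : 0 < Real.exp (β * μ) := Real.exp_pos _
  have hwj : w j = Real.exp (β * μ) / ∑ i, Real.exp (β * l i) := by
    rw [hw j, hljμ]
  have hDpos : 0 < (k : ℝ) + ((n : ℝ) - (k : ℝ)) * Real.exp (-β * lam) := by
    have hnk : 0 ≤ (n : ℝ) - (k : ℝ) := by
      rw [← hcard]; positivity
    positivity
  constructor
  · -- lower bound
    have hSle : ∑ i, Real.exp (β * l i)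
        ≤ Real.exp (β * μ) * ((k : ℝ) + ((n : ℝ) - (k : ℝ)) * Real.exp (-β * lam)) := by
      rw [hS, hJsum]
      have : Real.exp (β * (μ - lam)) = Real.exp (β * μ) * Real.exp (-β * lam) := by
        rw [← Real.exp_add]; ring_nf
      rw [this] at hcompsum_le
      nlinarith
    rw [hwj, div_le_div_iff₀ hDpos hSpos]
    linarith
  · -- upper bound
    rw [hwj, div_le_div_iff₀ hSpos hkpos]
    have : (k : ℝ) * Real.exp (β * μ) ≤ ∑ i, Real.exp (β * l i) := by
      rw [hS, hJsum]; linarith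
    linarith
end

section
/- Consider a valid number-task input σ = s₁...s_{n₁} j₁...j_{n₂} with hop chain j_{k₁}, ..., j_{k_h} satisfying k₁ = n₂ (interpreting positions in the full sequence), k_i - k_{i+1} = j_{k_i} for each i < h, and the last hop landing on a letter position. Then applying the Index function h times to σ places the answer letter s* at the last position: Index^h(σ)_{last} = s*, where s* is the letter at position (n₁ + k_h) - j_{k_h} of σ. -/
/-- The Selective Index function: at a position `j` holding an integer `i`,
copy the token at position `j - i` if it exists and is a letter; otherwise keep. -/
def indexFun {α : Type*} (σ : List (α ⊕ ℕ)) : List (α ⊕ ℕ) :=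
  σ.mapIdx fun j s =>
    match s with
    | Sum.inl a => Sum.inl a
    | Sum.inr i =>
      if i ≤ j then
        match σ[j - i]? with
        | some (Sum.inl a) => Sum.inl a
        | _ => Sum.inr i
      else Sum.inr i

lemma getElem?_mapIdx' {α β : Type*} (l : List α) (f : ℕ → α → β) (i : ℕ) :
    (l.mapIdx f)[i]? = Option.map (f i) l[i]? := by
  rcases lt_or_ge i l.length with h | h
  · rw [List.getElem?_eq_getElem (by simpa using h), List.getElem?_eq_getElem h]
    simp [List.getElem_mapIdx]
  · rw [List.getElem?_eq_none (by simpa using h), List.getElem?_eq_none h]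
    rfl

lemma indexFun_length {α : Type*} (σ : List (α ⊕ ℕ)) :
    (indexFun σ).length = σ.length := by
  simp [indexFun]

lemma indexFun_resolve {α : Type*} (σ : List (α ⊕ ℕ)) {j i : ℕ}
    (hj : σ[j]? = some (Sum.inr i)) (hle : i ≤ j) {a : α}
    (ht : σ[j - i]? = some (Sum.inl a)) :
    (indexFun σ)[j]? = some (Sum.inl a) := by
  rw [indexFun, getElem?_mapIdx', hj]
  simp only [Option.map_some]
  rw [if_pos hle] at *
  rw [ht]

lemma indexFun_stay {α : Type*} (σ : List (α ⊕ ℕ)) {j i i' : ℕ}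
    (hj : σ[j]? = some (Sum.inr i)) (hle : i ≤ j)
    (ht : σ[j - i]? = some (Sum.inr i')) :
    (indexFun σ)[j]? = some (Sum.inr i) := by
  rw [indexFun, getElem?_mapIdx', hj]
  simp only [Option.map_some]
  rw [if_pos hle] at *
  rw [ht]

/-- Applying `Index` `h` times on a valid number-task input places the
answer letter `s*` at the last position.  Positions are 1-indexed as in the
paper: the sequence consists of `n₁` letters followed by `n₂` integers,
`jval p` is the integer at (suffix) position `p`, `k i` is the (suffix)
position of the `i`-th hop, the chain starts at the last integer
(`k 1 = n₂`), each hop satisfies `k i - k (i+1) = jval (k i)`, and the final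
hop lands on the letter at (full-sequence) position `q = n₁ + k h - jval (k h)`. -/
theorem index_iter_solves_number_task {α : Type*} (σ : List (α ⊕ ℕ))
    (n₁ n₂ h : ℕ) (hn₁ : 0 < n₁) (hn₂ : 0 < n₂) (hh : 0 < h)
    (hlen : σ.length = n₁ + n₂)
    (hletters : ∀ p, 1 ≤ p → p ≤ n₁ → ∃ a : α, σ[p - 1]? = some (Sum.inl a))
    (jval : ℕ → ℕ)
    (hints : ∀ p, 1 ≤ p → p ≤ n₂ → σ[n₁ + p - 1]? = some (Sum.inr (jval p)))
    (hjpos : ∀ p, 1 ≤ p → p ≤ n₂ → 1 ≤ jval p)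
    (k : ℕ → ℕ)
    (hkdom : ∀ i, 1 ≤ i → i ≤ h → 1 ≤ k i ∧ k i ≤ n₂)
    (hk1 : k 1 = n₂)
    (hchain : ∀ i, 1 ≤ i → i < h → k i - k (i + 1) = jval (k i))
    (q : ℕ) (hq : q = n₁ + k h - jval (k h)) (hq1 : 1 ≤ q) (hqn : q ≤ n₁)
    (sstar : α) (hstar : σ[q - 1]? = some (Sum.inl sstar)) :
    (indexFun^[h] σ)[n₁ + n₂ - 1]? = some (Sum.inl sstar) := by
  -- jval at k h is small enough
  have hkh := hkdom h (by omega) le_rfl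
  have hjh : jval (k h) ≤ n₁ + k h - 1 := by omega
  -- key facts about chain steps
  have hstep : ∀ i, 1 ≤ i → i < h →
      k (i + 1) < k i ∧ (n₁ + k i - 1) - jval (k i) = n₁ + k (i + 1) - 1 ∧
      jval (k i) ≤ n₁ + k i - 1 := by
    intro i hi1 hih
    have hki := hkdom i hi1 (by omega)
    have hki1 := hkdom (i + 1) (by omega) (by omega)
    have hc := hchain i hi1 hih
    have hjp := hjpos (k i) hki.1 hki.2
    refine ⟨by omega, by omega, by omega⟩
  have main : ∀ t, t ≤ h →
      (∀ i, 1 ≤ i → i ≤ h - t →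
        (indexFun^[t] σ)[n₁ + k i - 1]? = some (Sum.inr (jval (k i)))) ∧
      (1 ≤ t → (indexFun^[t] σ)[n₁ + k (h - t + 1) - 1]? = some (Sum.inl sstar)) := by
    intro t
    induction t with
    | zero =>
      intro _
      refine ⟨fun i hi1 hit => ?_, by omega⟩
      have hki := hkdom i hi1 (by omega)
      simpa using hints (k i) hki.1 hki.2
    | succ t ih =>
      intro ht1
      obtain ⟨ihint, ihlet⟩ := ih (by omega)
      rw [Function.iterate_succ_apply']
      constructor
      · intro i hi1 hit
        have hih : i < h := by omega
        have hs := hstep i hi1 hih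
        have htgt : (indexFun^[t] σ)[(n₁ + k i - 1) - jval (k i)]? =
            some (Sum.inr (jval (k (i + 1)))) := by
          rw [hs.2.1]
          exact ihint (i + 1) (by omega) (by omega)
        exact indexFun_stay _ (ihint i hi1 (by omega)) (by omega) htgt
      · intro _
        have hi1 : 1 ≤ h - t := by omega
        have hkey : (indexFun^[t] σ)[(n₁ + k (h - t) - 1) - jval (k (h - t))]? =
            some (Sum.inl sstar) := by
          rcases Nat.eq_zero_or_pos t with rfl | htpos
          · have : h - 0 = h := by omega
            rw [this]
            have hq' : (n₁ + k h - 1) - jval (k h) = q - 1 := by omega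
            simpa [hq'] using hstar
          · have hih : h - t < h := by omega
            have hs := hstep (h - t) hi1 hih
            rw [hs.2.1]
            have : h - t + 1 = h - t + 1 := rfl
            simpa [Nat.sub_sub, show h - t + 1 = h - t + 1 from rfl] using ihlet htpos
        have hle : jval (k (h - t)) ≤ n₁ + k (h - t) - 1 := by
          rcases Nat.eq_zero_or_pos t with rfl | htpos
          · have : h - 0 = h := by omega
            rw [this]; exact hjh
          · exact (hstep (h - t) hi1 (by omega)).2.2
        have := indexFun_resolve (indexFun^[t] σ) (ihint (h - t) hi1 le_rfl) hle hkey
        have hidx : h - (t + 1) + 1 = h - t := by omega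
        rw [hidx]
        exact this
  have := (main h le_rfl).2 (by omega)
  have hidx : h - h + 1 = 1 := by omega
  rw [hidx, hk1] at this
  exact this
end

section
/- Let f : List Σ → Σ be any function that is invariant under permutations of its input sequence (f(σ) = f(π·σ) for all permutations π). Then f cannot compute the last coordinate of the Selective Index function on all valid number-task inputs of length ≥ 3: there exist two valid inputs σ and σ', where σ' is obtained from σ by swapping two letter tokens, such that Index(σ)_last ≠ Index(σ')_last, and hence f is wrong on at least one of them. -/
/-- A valid number-task input: it ends with an integer `i ≥ 1`, and the
position `i` steps back from the end holds a letter (the target output). -/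
def ValidNumberInput {α : Type*} (σ : List (α ⊕ ℕ)) : Prop :=
  ∃ i : ℕ, 1 ≤ i ∧ i < σ.length ∧ σ.getLast? = some (Sum.inr i) ∧
    ∃ a : α, σ[σ.length - 1 - i]? = some (Sum.inl a)

/-- A permutation-invariant (purely symbolic) function cannot compute the last
coordinate of the Selective Index function on all valid number-task inputs of
length ≥ 3. -/
theorem symbolic_cannot_index {α : Type*} (a b : α) (hab : a ≠ b)
    (f : List (α ⊕ ℕ) → (α ⊕ ℕ))
    (hf : ∀ σ σ' : List (α ⊕ ℕ), σ.Perm σ' → f σ = f σ') :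
    ∃ σ σ' : List (α ⊕ ℕ), σ.Perm σ' ∧ 3 ≤ σ.length ∧
      ValidNumberInput σ ∧ ValidNumberInput σ' ∧
      (indexFun σ).getLast? ≠ (indexFun σ').getLast? ∧
      ((indexFun σ).getLast? ≠ some (f σ) ∨ (indexFun σ').getLast? ≠ some (f σ')) := by
  have hp : List.Perm [Sum.inl a, Sum.inl b, (Sum.inr 1 : α ⊕ ℕ)]
      [Sum.inl b, Sum.inl a, Sum.inr 1] := List.Perm.swap _ _ _
  refine ⟨[Sum.inl a, Sum.inl b, Sum.inr 1], [Sum.inl b, Sum.inl a, Sum.inr 1],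
    hp, by simp, ⟨1, le_refl 1, by simp, by simp, b, by simp⟩,
    ⟨1, le_refl 1, by simp, by simp, a, by simp⟩, ?_, ?_⟩
  · simp [indexFun, List.mapIdx, List.mapIdx.go]
    exact fun h => hab h.symm
  · have hff := hf _ _ hp
    by_contra h
    push_neg at h
    obtain ⟨h1, h2⟩ := h
    rw [hff] at h1
    rw [← h1] at h2
    simp [indexFun, List.mapIdx, List.mapIdx.go] at h2
    exact hab h2
end
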